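/- arXiv:2011.10332 — 4 statements merged into one kernel-verified Lean document; each statement's English description precedes it below -/
import Mathlib

section
/- For every smooth compactly supported function u on (0,∞) and every constant c ≤ 1/4, the inequality c ∫₀^∞ |u(x)|²/x² dx ≤ ∫₀^∞ |u'(x)|² dx holds (Hardy's inequality on the half-line). -/
open MeasureTheory Set RealInnerProductSpace Filter

private lemma hardyAux {f : ℝ → ℝ} (hm : Measurable f) {b M : ℝ} (hb : (0:ℝ) ≤ b)
    (hbd : ∀ x ∈ Ioc (0:ℝ) b, |f x| ≤ M) (hz : ∀ x, b < x → f x = 0) :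
    IntegrableOn f (Ioi (0:ℝ)) := by
  have h1 : IntegrableOn f (Ioc 0 b) := by
    refine Measure.integrableOn_of_bounded (M := M) (by simp) hm.aestronglyMeasurable ?_
    filter_upwards [ae_restrict_mem measurableSet_Ioc] with x hx
    simpa [Real.norm_eq_abs] using hbd x hx
  have h2 : IntegrableOn f (Ioi b) := by
    have : EqOn f 0 (Ioi b) := fun x hx => hz x hx
    exact (integrableOn_congr_fun this measurableSet_Ioi).mpr (integrableOn_zero)
  have := h1.union h2
  rwa [Ioc_union_Ioi_eq_Ioi hb] at this

/-- **Hardy's inequality on the half-line.** For every smooth compactly supported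
function `u` on `(0,∞)` and every constant `c ≤ 1/4`,
`c ∫₀^∞ |u|²/x² ≤ ∫₀^∞ |u'|²`. -/
theorem hardy_inequality_halfline (c : ℝ) (hc : c ≤ 1/4)
    (u : ℝ → ℂ) (hu : ContDiff ℝ (⊤ : ℕ∞) u) (hsupp : HasCompactSupport u)
    (hsupp' : Function.support u ⊆ Set.Ioi 0) :
    c * ∫ x in Ioi (0:ℝ), ‖u x‖^2 / x^2 ≤ ∫ x in Ioi (0:ℝ), ‖deriv u x‖^2 := by
  have hdiff : Differentiable ℝ u := hu.differentiable (by simp)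
  have hd : ∀ x, HasDerivAt u (deriv u x) x := fun x => (hdiff x).hasDerivAt
  have hcd : Continuous (deriv u) := hu.continuous_deriv (by simp)
  have hu0 : u 0 = 0 := by
    by_contra h
    exact absurd (hsupp' h) (by simp)
  -- bound on the derivative
  obtain ⟨x₀, hx₀⟩ := hcd.norm.exists_forall_ge_of_hasCompactSupport (hsupp.deriv.norm)
  set C := ‖deriv u x₀‖ with hCdef
  have hC0 : 0 ≤ C := norm_nonneg _
  have hub : ∀ x : ℝ, 0 ≤ x → ‖u x‖ ≤ C * x := by
    intro x hx
    have h : ‖u x - u 0‖ ≤ C * ‖x - 0‖ := Convex.norm_image_sub_le_of_norm_deriv_le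
      (fun z _ => hdiff z) (fun z _ => hx₀ z) convex_univ trivial trivial
    simpa [hu0, abs_of_nonneg hx] using h
  have hub2 : ∀ x : ℝ, 0 ≤ x → ‖u x‖^2 ≤ C^2 * x^2 := by
    intro x hx
    have h := hub x hx
    nlinarith [norm_nonneg (u x)]
  -- upper bound of the support
  obtain ⟨r, hr⟩ := hsupp.isCompact.bddAbove
  set b := max r 0 + 1 with hbdef
  have hb : (0:ℝ) < b := by positivity
  have hbig : ∀ x, b < x → u x = 0 ∧ deriv u x = 0 := by
    intro x hx
    have hxs : x ∉ tsupport u := by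
      intro hmem
      have h1 : x ≤ r := hr hmem
      have h2 : r ≤ max r 0 := le_max_left _ _
      linarith
    exact ⟨image_eq_zero_of_notMem_tsupport hxs,
      Function.notMem_support.mp (fun hs => hxs (support_deriv_subset hs))⟩
  -- the key auxiliary functions
  set g : ℝ → ℝ := fun x => ‖u x‖^2 / x^2 with hgdef
  set G : ℝ → ℝ := fun x => (2 * ⟪u x, deriv u x⟫ * x - ‖u x‖^2) / x^2 with hGdef
  set F : ℝ → ℝ := fun x => ‖u x‖^2 / x with hFdef
  have cinner : Continuous fun x => ⟪u x, deriv u x⟫ := hu.continuous.inner hcd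
  have mg : Measurable g := ((hu.continuous.norm.pow 2).measurable).div ((continuous_pow 2).measurable)
  have mG : Measurable G := (((continuous_const.mul cinner).mul continuous_id').sub
    (hu.continuous.norm.pow 2)).measurable.div ((continuous_pow 2).measurable)
  -- integrabilities
  have hgint : IntegrableOn g (Ioi (0:ℝ)) := by
    refine hardyAux mg hb.le (M := C^2) ?_ ?_
    · intro x hx
      have hx2 : (0:ℝ) < x^2 := pow_pos hx.1 2
      simp only [hgdef]
      rw [abs_of_nonneg (by positivity), div_le_iff₀ hx2]
      exact hub2 x hx.1.le
    · intro x hx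
      simp [hgdef, (hbig x hx).1]
  have hGint : IntegrableOn G (Ioi (0:ℝ)) := by
    refine hardyAux mG hb.le (M := 3 * C^2) ?_ ?_
    · intro x hx
      have hx0 : (0:ℝ) < x := hx.1
      have hx2 : (0:ℝ) < x^2 := pow_pos hx0 2
      have ha : |⟪u x, deriv u x⟫| ≤ C^2 * x := by
        calc |⟪u x, deriv u x⟫| ≤ ‖u x‖ * ‖deriv u x‖ := abs_real_inner_le_norm _ _
          _ ≤ (C * x) * C := by
              apply mul_le_mul (hub x hx0.le) (hx₀ x) (norm_nonneg _) (by positivity)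
          _ = C^2 * x := by ring
      simp only [hGdef]
      rw [abs_div, abs_of_nonneg hx2.le, div_le_iff₀ hx2]
      have hn := hub2 x hx0.le
      have habs := abs_le.mp ha
      rw [abs_sub_le_iff]
      constructor <;> nlinarith [sq_nonneg (‖u x‖), norm_nonneg (u x)]
    · intro x hx
      simp [hGdef, (hbig x hx).1, (hbig x hx).2]
  have hu'int : IntegrableOn (fun x => ‖deriv u x‖^2) (Ioi (0:ℝ)) := by
    refine (Continuous.integrable_of_hasCompactSupport (hcd.norm.pow 2) ?_).integrableOn
    have h := (hsupp.deriv).comp_left (g := fun z : ℂ => ‖z‖^2) (by simp)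
    exact h
  -- FTC: the integral of G vanishes
  have hF0 : F 0 = 0 := by simp [hFdef, hu0]
  have hFcont : ContinuousWithinAt F (Ici 0) 0 := by
    rw [ContinuousWithinAt, hF0]
    apply squeeze_zero' (g := fun t => C^2 * t)
    · filter_upwards [self_mem_nhdsWithin] with t (ht : t ∈ Ici (0:ℝ))
      simp only [hFdef]
      exact div_nonneg (by positivity) ht
    · filter_upwards [self_mem_nhdsWithin] with t (ht : t ∈ Ici (0:ℝ))
      rcases eq_or_lt_of_le (show (0:ℝ) ≤ t from ht) with h | h
      · simp [hFdef, ← h, hu0]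
      · simp only [hFdef]
        rw [div_le_iff₀ h]
        calc ‖u t‖^2 ≤ C^2 * t^2 := hub2 t ht
          _ = C^2 * t * t := by ring
    · have : Tendsto (fun t : ℝ => C^2 * t) (nhds 0) (nhds (C^2 * 0)) :=
        (continuous_const.mul continuous_id).tendsto 0
      simpa using this.mono_left nhdsWithin_le_nhds
  have hFtop : Tendsto F atTop (nhds 0) := by
    have heq : F =ᶠ[atTop] fun _ => (0:ℝ) := by
      filter_upwards [eventually_gt_atTop b] with x hx
      simp [hFdef, (hbig x hx).1]
    rw [tendsto_congr' heq]
    exact tendsto_const_nhds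
  have hFderiv : ∀ x ∈ Ioi (0:ℝ), HasDerivAt F (G x) x := by
    intro x hx
    have hx0 : x ≠ 0 := ne_of_gt hx
    have hN : HasDerivAt (fun y => ‖u y‖^2) (2 * ⟪u x, deriv u x⟫) x := by
      have h1 := HasDerivAt.inner ℝ (hd x) (hd x)
      have heq : (fun y => ‖u y‖^2) = fun y => ⟪u y, u y⟫ :=
        funext fun y => (real_inner_self_eq_norm_sq _).symm
      rw [heq]
      refine h1.congr_deriv ?_
      rw [real_inner_comm]
      ring
    have h2 := hN.div (hasDerivAt_id x) hx0
    refine h2.congr_deriv ?_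
    simp [hGdef]
  have hGzero : ∫ x in Ioi (0:ℝ), G x = 0 := by
    rw [integral_Ioi_of_hasDerivAt_of_tendsto hFcont hFderiv hGint hFtop, hF0, sub_zero]
  -- pointwise inequality
  have hpt : ∀ x ∈ Ioi (0:ℝ), (1/4) * g x + (1/2) * G x ≤ ‖deriv u x‖^2 := by
    intro x hx
    have hx0 : (0:ℝ) < x := hx
    have hx2 : (0:ℝ) < x^2 := pow_pos hx0 2
    have hxne : x ≠ 0 := ne_of_gt hx0
    have key : (0:ℝ) ≤ ‖x • deriv u x - (1/2 : ℝ) • u x‖^2 := sq_nonneg _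
    rw [norm_sub_sq_real, real_inner_smul_left, real_inner_smul_right, norm_smul, norm_smul,
      real_inner_comm] at key
    simp only [Real.norm_eq_abs] at key
    simp only [hgdef, hGdef]
    rw [← sub_nonneg]
    have heq : ‖deriv u x‖^2 - (1/4 * (‖u x‖^2/x^2) +
        1/2 * ((2 * ⟪u x, deriv u x⟫ * x - ‖u x‖^2)/x^2))
        = (x^2 * ‖deriv u x‖^2 - x * ⟪u x, deriv u x⟫ + ‖u x‖^2/4)/x^2 := by
      field_simp
      ring
    rw [heq]
    apply div_nonneg _ hx2.le
    nlinarith [key, sq_abs x, sq_abs (1/2 : ℝ), abs_of_pos hx0]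
  -- integrate the pointwise inequality
  have hint : ∫ x in Ioi (0:ℝ), ((1/4) * g x + (1/2) * G x) ≤ ∫ x in Ioi (0:ℝ), ‖deriv u x‖^2 :=
    setIntegral_mono_on ((hgint.const_mul _).add (hGint.const_mul _)) hu'int
      measurableSet_Ioi hpt
  rw [integral_add (hgint.const_mul _) (hGint.const_mul _), integral_const_mul,
    integral_const_mul, hGzero, mul_zero, add_zero] at hint
  have hgnn : 0 ≤ ∫ x in Ioi (0:ℝ), g x :=
    setIntegral_nonneg measurableSet_Ioi (fun x hx => by simp only [hgdef]; positivity)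
  calc c * ∫ x in Ioi (0:ℝ), g x ≤ (1/4) * ∫ x in Ioi (0:ℝ), g x :=
        mul_le_mul_of_nonneg_right hc hgnn
    _ ≤ ∫ x in Ioi (0:ℝ), ‖deriv u x‖^2 := hint
end

section
/- Let p > 1, c < 1/4, and ω ≤ 0. Then the equation φ'' + (c/x²)φ − ωφ + |φ|^{p−1}φ = 0 has no nontrivial solution in H¹₀(0,∞). Equivalently, any nontrivial solution requires ω > 0, since combining the two identities gives ω‖φ‖²_{L²} = ((p+3)/(2(p+1)))‖φ‖^{p+1}_{L^{p+1}} > 0. -/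
open MeasureTheory Set

theorem mul_eq_of_nehari_of_pohozaev {p ω K M L : ℝ} (hp : p + 1 ≠ 0)
    (hnehari : K + ω * M - L = 0) (hpohozaev : K - (p - 1) / (2 * (p + 1)) * L = 0) :
    ω * M = (p + 3) / (2 * (p + 1)) * L := by
  have hK : K = (p - 1) / (2 * (p + 1)) * L := by linarith
  have hωM : ω * M = L - K := by linarith
  rw [hωM, hK]
  field_simp
  ring

theorem no_nontrivial_solution_nonpositive_omega_general (p ω c : ℝ) (hp : 1 < p)
    (hω : ω ≤ 0) (φ : ℝ → ℂ)
    (hnehari : (∫ x in Ioi (0:ℝ), ‖deriv φ x‖^2) - c * (∫ x in Ioi (0:ℝ), ‖φ x‖^2 / x^2)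
      + ω * (∫ x in Ioi (0:ℝ), ‖φ x‖^2) - (∫ x in Ioi (0:ℝ), ‖φ x‖ ^ (p+1)) = 0)
    (hpohozaev : (∫ x in Ioi (0:ℝ), ‖deriv φ x‖^2) - c * (∫ x in Ioi (0:ℝ), ‖φ x‖^2 / x^2)
      - ((p-1) / (2*(p+1))) * (∫ x in Ioi (0:ℝ), ‖φ x‖ ^ (p+1)) = 0)
    (hnontrivial : 0 < ∫ x in Ioi (0:ℝ), ‖φ x‖ ^ (p+1)) :
    False := by
  have hωM := mul_eq_of_nehari_of_pohozaev (by linarith) hnehari hpohozaev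
  have hM : 0 ≤ ∫ x in Ioi (0:ℝ), ‖φ x‖ ^ 2 := integral_nonneg fun x => sq_nonneg _
  have hlhs : ω * ∫ x in Ioi (0:ℝ), ‖φ x‖ ^ 2 ≤ 0 := mul_nonpos_of_nonpos_of_nonneg hω hM
  have hrhs : 0 < (p + 3) / (2 * (p + 1)) * ∫ x in Ioi (0:ℝ), ‖φ x‖ ^ (p+1) :=
    mul_pos (div_pos (by linarith) (by linarith)) hnontrivial
  linarith

/-- **No nontrivial standing waves for `ω ≤ 0`.** If `φ ∈ H¹₀(0,∞)` satisfies both the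
Nehari identity `‖φ'‖² − c‖φ/x‖² + ω‖φ‖² − ‖φ‖_{L^{p+1}}^{p+1} = 0` and the Pohozaev
identity `‖φ'‖² − c‖φ/x‖² − ((p−1)/(2(p+1)))‖φ‖_{L^{p+1}}^{p+1} = 0`, and `φ` is
nontrivial (its `L^{p+1}` norm is positive), then `ω ≤ 0` is impossible:
indeed `ω‖φ‖² = ((p+3)/(2(p+1)))‖φ‖_{L^{p+1}}^{p+1} > 0`. -/
theorem no_nontrivial_solution_nonpositive_omega (p ω c : ℝ) (hp : 1 < p) (hc : c < 1/4)
    (hω : ω ≤ 0) (φ : ℝ → ℂ)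
    (hnehari : (∫ x in Ioi (0:ℝ), ‖deriv φ x‖^2) - c * (∫ x in Ioi (0:ℝ), ‖φ x‖^2 / x^2)
      + ω * (∫ x in Ioi (0:ℝ), ‖φ x‖^2) - (∫ x in Ioi (0:ℝ), ‖φ x‖ ^ (p+1)) = 0)
    (hpohozaev : (∫ x in Ioi (0:ℝ), ‖deriv φ x‖^2) - c * (∫ x in Ioi (0:ℝ), ‖φ x‖^2 / x^2)
      - ((p-1) / (2*(p+1))) * (∫ x in Ioi (0:ℝ), ‖φ x‖ ^ (p+1)) = 0)
    (hnontrivial : 0 < ∫ x in Ioi (0:ℝ), ‖φ x‖ ^ (p+1)) :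
    False :=
  no_nontrivial_solution_nonpositive_omega_general p ω c hp hω φ hnehari hpohozaev hnontrivial
end

section
/- Let ω > 0, p > 1, q the exponentially decaying soliton, and ψ_A(x) = q(x+A) − q(x−A) for x ≥ 0. Then ψ_A ∈ H¹₀(0,∞), and ∫₀^∞ |ψ_A|^{p+1} dx = ∫_{−∞}^∞ |q|^{p+1} dx + O(e^{−2√ω A}) as A → ∞. -/
open MeasureTheory Set Real

/-!
On `x > 0` the convexity bound `||b − a|^r − a^r| ≤ r (a + b)^{r−1} b` with `a = q(x−A)`,
`b = q(x+A)` compares `|ψ_A|^{p+1}` with the translate `q(x−A)^{p+1}`, and the factor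
`q(x+A) ≤ M e^{−√ω (x+A)}` together with `(a + b)^p ≲ e^{−p√ω|x−A|}` produces
`e^{−2√ω A} e^{−(p−1)√ω|x−A|}`. On `x ≤ 0` the translate alone is the error, and
`q(x−A)^{p+1} ≲ e^{−(p+1)√ω|x−A|}` with `|x − A| ≥ A` gives the same majorant. Its integral
does not depend on `A`, which yields the `O(e^{−2√ω A})` bound. The `H¹` part is translation
invariance of `L²` applied to `q` and `q'`.
-/

lemma rpow_sub_rpow_le_mul_sub {r s t : ℝ} (hr : 1 ≤ r) (hs : 0 ≤ s) (hst : s ≤ t) :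
    t ^ r - s ^ r ≤ r * t ^ (r - 1) * (t - s) := by
  rcases hst.eq_or_lt with rfl | hst
  · simp
  have hslope := (convexOn_rpow hr).slope_le_of_hasDerivAt hs (hs.trans hst.le) hst
    (hasDerivAt_rpow_const (Or.inr hr))
  rwa [slope_def_field, div_le_iff₀ (sub_pos.2 hst)] at hslope

lemma abs_rpow_sub_rpow_le {r K u v : ℝ} (hr : 1 ≤ r) (hu : 0 ≤ u) (hv : 0 ≤ v)
    (huK : u ≤ K) (hvK : v ≤ K) : |u ^ r - v ^ r| ≤ r * K ^ (r - 1) * |u - v| := by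
  wlog hvu : v ≤ u generalizing u v
  · rw [abs_sub_comm, abs_sub_comm u]
    exact this hv hu hvK huK (le_of_not_ge hvu)
  have hr0 : 0 ≤ r := zero_le_one.trans hr
  rw [abs_of_nonneg (sub_nonneg.2 (rpow_le_rpow hv hvu hr0)), abs_of_nonneg (sub_nonneg.2 hvu)]
  calc u ^ r - v ^ r ≤ r * u ^ (r - 1) * (u - v) := rpow_sub_rpow_le_mul_sub hr hv hvu
    _ ≤ r * K ^ (r - 1) * (u - v) := by gcongr

lemma abs_rpow_abs_sub_sub_rpow_le {r a b : ℝ} (hr : 1 ≤ r) (ha : 0 ≤ a) (hb : 0 ≤ b) :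
    |(|b - a|) ^ r - a ^ r| ≤ r * (a + b) ^ (r - 1) * b := by
  have hba : |b - a| ≤ a + b := abs_sub_le_iff.2 ⟨by linarith, by linarith⟩
  have hdist : |(|b - a|) - a| ≤ b := by
    simpa [abs_of_nonneg ha, abs_of_nonneg hb] using abs_abs_sub_abs_le_abs_sub (b - a) (-a)
  calc |(|b - a|) ^ r - a ^ r| ≤ r * (a + b) ^ (r - 1) * |(|b - a|) - a| :=
        abs_rpow_sub_rpow_le hr (abs_nonneg _) ha hba (by linarith)
    _ ≤ r * (a + b) ^ (r - 1) * b := by gcongr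

lemma rpow_le_mul_exp_of_le_mul_exp {r M t y : ℝ} (hr : 0 ≤ r) (hM : 0 ≤ M) (hy : 0 ≤ y)
    (h : y ≤ M * exp t) : y ^ r ≤ M ^ r * exp (r * t) := by
  calc y ^ r ≤ (M * exp t) ^ r := rpow_le_rpow hy h hr
    _ = M ^ r * exp (r * t) := by rw [mul_rpow hM (exp_pos t).le, ← exp_mul, mul_comm t]

lemma integrable_exp_neg_mul_abs {c : ℝ} (hc : 0 < c) :
    Integrable fun x : ℝ => exp (-c * |x|) := by
  rw [← integrableOn_univ, ← Iic_union_Ioi (a := 0)]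
  refine IntegrableOn.union ?_ ?_
  · refine (integrableOn_exp_mul_Iic hc 0).congr_fun (fun x hx => ?_) measurableSet_Iic
    rw [abs_of_nonpos hx, neg_mul_neg]
  · refine (integrableOn_exp_mul_Ioi (neg_neg_of_pos hc) 0).congr_fun (fun x hx => ?_)
      measurableSet_Ioi
    rw [abs_of_pos hx]

lemma memLp_two_of_abs_le_mul_exp {f : ℝ → ℝ} {M c : ℝ} (hf : AEStronglyMeasurable f)
    (hc : 0 < c) (hbound : ∀ x, |f x| ≤ M * exp (-c * |x|)) : MemLp f 2 volume := by
  rw [memLp_two_iff_integrable_sq hf]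
  refine ((integrable_exp_neg_mul_abs (mul_pos two_pos hc)).const_mul (M ^ 2)).mono'
    (hf.pow 2) (Filter.Eventually.of_forall fun x => ?_)
  calc ‖f x ^ 2‖ = |f x| ^ 2 := by rw [Real.norm_eq_abs, abs_pow, pow_two]
    _ ≤ (M * exp (-c * |x|)) ^ 2 := by gcongr; exact hbound x
    _ = M ^ 2 * exp (-(2 * c) * |x|) := by rw [mul_pow, ← exp_nat_mul]; ring_nf

lemma memLp_two_comp_add_sub_comp_sub {f : ℝ → ℝ} (hf : MemLp f 2 volume) (A : ℝ) :
    MemLp (fun x => f (x + A) - f (x - A)) 2 volume :=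
  (hf.comp_measurePreserving (measurePreserving_add_right volume A)).sub
    (hf.comp_measurePreserving (measurePreserving_sub_right volume A))

lemma deriv_comp_add_sub_comp_sub {𝕜 F : Type*} [NontriviallyNormedField 𝕜]
    [NormedAddCommGroup F] [NormedSpace 𝕜 F] {f : 𝕜 → F} (hf : Differentiable 𝕜 f) (A : 𝕜) :
    deriv (fun x => f (x + A) - f (x - A)) = fun x => deriv f (x + A) - deriv f (x - A) := by
  funext x
  have hplus : DifferentiableAt 𝕜 (fun x => f (x + A)) x :=
    (hf _).comp x (differentiableAt_id.add_const A)
  have hminus : DifferentiableAt 𝕜 (fun x => f (x - A)) x :=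
    (hf _).comp x (differentiableAt_id.sub_const A)
  rw [deriv_fun_sub hplus hminus, deriv_comp_add_const, deriv_comp_sub_const]

section Soliton

variable {q : ℝ → ℝ} {M c p A x : ℝ}

lemma integrable_rpow_of_le_mul_exp (hq_cont : Continuous q) (hq_pos : ∀ x, 0 < q x)
    (hq_decay : ∀ x, q x ≤ M * exp (-c * |x|)) (hM : 0 ≤ M) (hc : 0 < c) {r : ℝ} (hr : 0 < r) :
    Integrable fun x => q x ^ r := by
  refine ((integrable_exp_neg_mul_abs (mul_pos hr hc)).const_mul (M ^ r)).mono'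
    (hq_cont.rpow_const fun _ => Or.inr hr.le).aestronglyMeasurable
    (Filter.Eventually.of_forall fun x => ?_)
  rw [Real.norm_eq_abs, abs_of_nonneg (rpow_nonneg (hq_pos x).le r), neg_mul_eq_mul_neg, mul_assoc]
  exact rpow_le_mul_exp_of_le_mul_exp hr.le hM (hq_pos x).le (hq_decay x)

lemma abs_rpow_abs_sub_shift_sub_rpow_le (hq_pos : ∀ x, 0 < q x)
    (hq_decay : ∀ x, q x ≤ M * exp (-c * |x|)) (hM : 0 ≤ M) (hc : 0 ≤ c) (hp : 0 ≤ p)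
    (hA : 0 ≤ A) (hx : 0 ≤ x) :
    |(|q (x + A) - q (x - A)|) ^ (p + 1) - q (x - A) ^ (p + 1)| ≤
      (p + 1) * (2 * M) ^ p * M * exp (-2 * c * A) * exp (-((p - 1) * c) * |x - A|) := by
  have hxA : |x - A| ≤ x + A := abs_sub_le_iff.2 ⟨by linarith, by linarith⟩
  have hAx : A - x ≤ |x - A| := by rw [abs_sub_comm]; exact le_abs_self _
  have hright : q (x + A) ≤ M * exp (-c * (x + A)) := by
    simpa [abs_of_nonneg (add_nonneg hx hA)] using hq_decay (x + A)
  have hsum : q (x - A) + q (x + A) ≤ 2 * M * exp (-c * |x - A|) := by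
    have : M * exp (-c * (x + A)) ≤ M * exp (-c * |x - A|) :=
      mul_le_mul_of_nonneg_left (exp_le_exp.2 (by nlinarith)) hM
    linarith [hq_decay (x - A)]
  have hsum_pow : (q (x - A) + q (x + A)) ^ p ≤ (2 * M) ^ p * exp (p * (-c * |x - A|)) :=
    rpow_le_mul_exp_of_le_mul_exp hp (by positivity) (add_nonneg (hq_pos _).le (hq_pos _).le) hsum
  calc |(|q (x + A) - q (x - A)|) ^ (p + 1) - q (x - A) ^ (p + 1)|
      ≤ (p + 1) * (q (x - A) + q (x + A)) ^ p * q (x + A) := by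
        simpa using abs_rpow_abs_sub_sub_rpow_le (r := p + 1) (by linarith) (hq_pos (x - A)).le
          (hq_pos (x + A)).le
    _ ≤ (p + 1) * ((2 * M) ^ p * exp (p * (-c * |x - A|))) * (M * exp (-c * (x + A))) := by
        gcongr
        exact (hq_pos _).le
    _ = (p + 1) * (2 * M) ^ p * M * exp (-c * (|x - A| + x + A) - (p - 1) * c * |x - A|) := by
        rw [mul_mul_mul_comm, mul_right_comm, mul_assoc _ (exp _), ← exp_add]
        ring_nf
    _ ≤ (p + 1) * (2 * M) ^ p * M * exp (-2 * c * A - (p - 1) * c * |x - A|) :=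
        mul_le_mul_of_nonneg_left (exp_le_exp.2 (by nlinarith)) (by positivity)
    _ = _ := by rw [mul_assoc _ (exp _), ← exp_add]; ring_nf

lemma rpow_shift_le_of_nonpos (hq_pos : ∀ x, 0 < q x)
    (hq_decay : ∀ x, q x ≤ M * exp (-c * |x|)) (hM : 0 ≤ M) (hc : 0 ≤ c) (hp : 0 ≤ p)
    (hx : x ≤ 0) :
    q (x - A) ^ (p + 1) ≤ M ^ (p + 1) * exp (-2 * c * A) * exp (-((p - 1) * c) * |x - A|) := by
  have hAx : A ≤ |x - A| := by
    rw [abs_sub_comm]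
    exact (by linarith : A ≤ A - x).trans (le_abs_self _)
  calc q (x - A) ^ (p + 1) ≤ M ^ (p + 1) * exp ((p + 1) * (-c * |x - A|)) :=
        rpow_le_mul_exp_of_le_mul_exp (by linarith) hM (hq_pos _).le (hq_decay _)
    _ ≤ M ^ (p + 1) * exp (-2 * c * A - (p - 1) * c * |x - A|) :=
        mul_le_mul_of_nonneg_left (exp_le_exp.2 (by nlinarith)) (by positivity)
    _ = _ := by rw [mul_assoc (M ^ (p + 1)) (exp _), ← exp_add]; ring_nf

lemma abs_indicator_rpow_abs_sub_shift_sub_rpow_le (hq_pos : ∀ x, 0 < q x)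
    (hq_decay : ∀ x, q x ≤ M * exp (-c * |x|)) (hM : 0 ≤ M) (hc : 0 ≤ c) (hp : 0 ≤ p)
    (hA : 0 ≤ A) (x : ℝ) :
    |(Ioi 0).indicator (fun x => |q (x + A) - q (x - A)| ^ (p + 1)) x - q (x - A) ^ (p + 1)| ≤
      ((p + 1) * (2 * M) ^ p * M + M ^ (p + 1)) * exp (-2 * c * A) *
        exp (-((p - 1) * c) * |x - A|) := by
  rw [add_mul, add_mul]
  by_cases hx : 0 < x
  · rw [indicator_of_mem (mem_Ioi.2 hx)]
    exact (abs_rpow_abs_sub_shift_sub_rpow_le hq_pos hq_decay hM hc hp hA hx.le).trans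
      (le_add_of_nonneg_right (by positivity))
  · rw [indicator_of_notMem (mt mem_Ioi.1 hx), zero_sub, abs_neg,
      abs_of_nonneg (rpow_nonneg (hq_pos _).le _)]
    exact (rpow_shift_le_of_nonpos hq_pos hq_decay hM hc hp (not_lt.1 hx)).trans
      (le_add_of_nonneg_left (by positivity))

lemma abs_setIntegral_rpow_abs_sub_shift_sub_integral_le (hq_cont : Continuous q)
    (hq_pos : ∀ x, 0 < q x) (hq_decay : ∀ x, q x ≤ M * exp (-c * |x|)) (hM : 0 ≤ M)
    (hc : 0 < c) (hp : 1 < p) (hA : 0 ≤ A) :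
    |(∫ x in Ioi 0, |q (x + A) - q (x - A)| ^ (p + 1)) - ∫ x, q x ^ (p + 1)| ≤
      ((p + 1) * (2 * M) ^ p * M + M ^ (p + 1)) * (∫ x, exp (-((p - 1) * c) * |x|)) *
        exp (-2 * c * A) := by
  set K := (p + 1) * (2 * M) ^ p * M + M ^ (p + 1)
  set ψ : ℝ → ℝ := fun x => |q (x + A) - q (x - A)| ^ (p + 1)
  set g : ℝ → ℝ := fun x => q (x - A) ^ (p + 1)
  have hψ_cont : Continuous ψ :=
    (show Continuous fun x => q (x + A) - q (x - A) by fun_prop).abs.rpow_const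
      fun _ => Or.inr (by linarith)
  have hg : Integrable g :=
    (integrable_rpow_of_le_mul_exp hq_cont hq_pos hq_decay hM hc (by linarith)).comp_sub_right A
  have hdom : Integrable fun x => K * exp (-2 * c * A) * exp (-((p - 1) * c) * |x - A|) :=
    ((integrable_exp_neg_mul_abs (mul_pos (sub_pos.2 hp) hc)).comp_sub_right A).const_mul _
  have hF : Integrable fun x => (Ioi 0).indicator ψ x - g x :=
    hdom.mono' ((hψ_cont.aestronglyMeasurable.indicator measurableSet_Ioi).sub
      hg.aestronglyMeasurable) (Filter.Eventually.of_forall fun x =>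
        abs_indicator_rpow_abs_sub_shift_sub_rpow_le hq_pos hq_decay hM hc.le (by linarith) hA x)
  have hsplit :
      (∫ x in Ioi 0, ψ x) - ∫ x, q x ^ (p + 1) = ∫ x, ((Ioi 0).indicator ψ x - g x) := by
    rw [integral_sub _ hg, integral_indicator measurableSet_Ioi,
      integral_sub_right_eq_self (fun x => q x ^ (p + 1)) A]
    exact (hF.add hg).congr (Filter.Eventually.of_forall fun x => sub_add_cancel _ _)
  rw [hsplit]
  calc |∫ x, ((Ioi 0).indicator ψ x - g x)| ≤ ∫ x, |(Ioi 0).indicator ψ x - g x| :=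
        abs_integral_le_integral_abs
    _ ≤ ∫ x, K * exp (-2 * c * A) * exp (-((p - 1) * c) * |x - A|) :=
        integral_mono hF.abs hdom fun x =>
          abs_indicator_rpow_abs_sub_shift_sub_rpow_le hq_pos hq_decay hM hc.le (by linarith) hA x
    _ = K * (∫ x, exp (-((p - 1) * c) * |x|)) * exp (-2 * c * A) := by
      rw [integral_const_mul, integral_sub_right_eq_self (fun x => exp (-((p - 1) * c) * |x|)) A]
      ring

end Soliton

theorem psiA_Lp_estimate_general (p ω : ℝ) (hp : 1 < p) (hω : 0 < ω)
    (q : ℝ → ℝ) (M : ℝ) (hM : 0 < M)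
    (hq_even : ∀ x, q (-x) = q x) (hq_pos : ∀ x, 0 < q x)
    (hq_smooth : ContDiff ℝ 2 q)
    (hq_decay : ∀ x, q x ≤ M * Real.exp (-(Real.sqrt ω) * |x|))
    (hq'_decay : ∀ x, |deriv q x| ≤ M * Real.exp (-(Real.sqrt ω) * |x|)) :
    (∀ A : ℝ, (fun x => q (x + A) - q (x - A)) 0 = 0 ∧
      MemLp (fun x => q (x + A) - q (x - A)) 2 (volume.restrict (Ioi (0:ℝ))) ∧
      MemLp (deriv (fun x => q (x + A) - q (x - A))) 2 (volume.restrict (Ioi (0:ℝ)))) ∧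
    ∃ C A₀ : ℝ, 0 < C ∧ 0 < A₀ ∧ ∀ A ≥ A₀,
      |(∫ x in Ioi (0:ℝ), |q (x + A) - q (x - A)| ^ (p+1)) - ∫ x : ℝ, (q x) ^ (p+1)|
        ≤ C * Real.exp (-2 * Real.sqrt ω * A) := by
  have hc : 0 < √ω := sqrt_pos.2 hω
  have hq_abs : ∀ x, |q x| ≤ M * exp (-√ω * |x|) := fun x =>
    (abs_of_pos (hq_pos x)).trans_le (hq_decay x)
  have hq_L2 := memLp_two_of_abs_le_mul_exp hq_smooth.continuous.aestronglyMeasurable hc hq_abs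
  have hq'_L2 := memLp_two_of_abs_le_mul_exp (measurable_deriv q).aestronglyMeasurable hc hq'_decay
  refine ⟨fun A => ⟨by simp [hq_even], (memLp_two_comp_add_sub_comp_sub hq_L2 A).restrict _, ?_⟩,
    ?_⟩
  · rw [deriv_comp_add_sub_comp_sub (hq_smooth.differentiable two_ne_zero) A]
    exact (memLp_two_comp_add_sub_comp_sub hq'_L2 A).restrict _
  · have hJ := integral_exp_pos (μ := volume)
      (integrable_exp_neg_mul_abs (mul_pos (sub_pos.2 hp) hc))
    refine ⟨_, 1, by positivity, one_pos, fun A hA =>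
      abs_setIntegral_rpow_abs_sub_shift_sub_integral_le hq_smooth.continuous hq_pos hq_decay
        hM.le hc hp (by linarith)⟩

/-- **`L^{p+1}` approximation by cut soliton differences.** Let `q` be the even, positive,
exponentially decaying soliton solving `q'' − ωq + q^p = 0` and
`ψ_A(x) = q(x+A) − q(x−A)`. Then `ψ_A ∈ H¹₀(0,∞)` (it vanishes at `0` and is `H¹` on
`(0,∞)`), and `∫₀^∞ |ψ_A|^{p+1} = ∫_ℝ |q|^{p+1} + O(e^{−2√ω A})` as `A → ∞`. -/
theorem psiA_Lp_estimate (p ω : ℝ) (hp : 1 < p) (hω : 0 < ω)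
    (q : ℝ → ℝ) (M : ℝ) (hM : 0 < M)
    (hq_even : ∀ x, q (-x) = q x) (hq_pos : ∀ x, 0 < q x)
    (hq_smooth : ContDiff ℝ 2 q)
    (hq_eq : ∀ x, deriv (deriv q) x - ω * q x + (q x) ^ p = 0)
    (hq_decay : ∀ x, q x ≤ M * Real.exp (-(Real.sqrt ω) * |x|))
    (hq'_decay : ∀ x, |deriv q x| ≤ M * Real.exp (-(Real.sqrt ω) * |x|)) :
    (∀ A : ℝ, (fun x => q (x + A) - q (x - A)) 0 = 0 ∧
      MemLp (fun x => q (x + A) - q (x - A)) 2 (volume.restrict (Ioi (0:ℝ))) ∧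
      MemLp (deriv (fun x => q (x + A) - q (x - A))) 2 (volume.restrict (Ioi (0:ℝ)))) ∧
    ∃ C A₀ : ℝ, 0 < C ∧ 0 < A₀ ∧ ∀ A ≥ A₀,
      |(∫ x in Ioi (0:ℝ), |q (x + A) - q (x - A)| ^ (p+1)) - ∫ x : ℝ, (q x) ^ (p+1)|
        ≤ C * Real.exp (-2 * Real.sqrt ω * A) :=
  psiA_Lp_estimate_general p ω hp hω q M hM hq_even hq_pos hq_smooth hq_decay hq'_decay
end

section
/- Let p ≥ 5 and suppose u(t) is a solution of the NLS on (−T_min, T_max) with conserved energy E(u(t)) = E(u₀) < 0 and satisfying the virial identities d/dt ‖xu(t)‖²_{L²} = 4 Im∫₀^∞ ū x u' dx and d²/dt² ‖xu(t)‖²_{L²} = 8Q(u(t)). Then Q(u(t)) ≤ 2E(u₀) < 0 for all t, and ‖xu(t)‖²_{L²} ≤ 8E(u₀)t² + C₁t + ‖xu₀‖²_{L²}; consequently T_min and T_max are finite (the solution blows up in finite time). -/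
/-!
Since `Q = 2E + (5 - p)/(2(p + 1)) ‖u‖^{p+1}_{L^{p+1}}` and `p ≥ 5`, conservation of energy gives
`V'' = 8 Q(u(t)) ≤ 16 E(u₀) < 0` for the variance `V(t) = ‖x u(t)‖²`. Hence `V` lies below its
second-order Taylor polynomial at `0` with `V''` replaced by `16 E(u₀)`, a quadratic with negative
leading coefficient; as `V ≥ 0`, this quadratic must stay nonnegative on the lifespan, which is
therefore bounded on both sides.
-/

open MeasureTheory Set

/-- `u ∈ H¹₀(0,∞)`, modeled as: `u` vanishes on `(-∞,0]`, is differentiable on `(0,∞)`,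
and `u`, `u'` are square integrable on `(0,∞)`. -/
def H10 (u : ℝ → ℂ) : Prop :=
  (∀ x ≤ (0:ℝ), u x = 0) ∧ DifferentiableOn ℝ u (Set.Ioi 0) ∧
  MemLp u 2 (volume.restrict (Set.Ioi 0)) ∧
  MemLp (deriv u) 2 (volume.restrict (Set.Ioi 0))

/-- The Hardy functional `H(u) = ∫₀^∞ (|u'|² − c|u|²/x²)`. -/
noncomputable def Hfun (c : ℝ) (u : ℝ → ℂ) : ℝ :=
  ∫ x in Ioi (0:ℝ), (‖deriv u x‖^2 - c * ‖u x‖^2 / x^2)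

/-- `‖u‖²_{L²(0,∞)}`. -/
noncomputable def Mfun (u : ℝ → ℂ) : ℝ := ∫ x in Ioi (0:ℝ), ‖u x‖^2

/-- `‖u‖^{p+1}_{L^{p+1}(0,∞)}`. -/
noncomputable def Nfun (p : ℝ) (u : ℝ → ℂ) : ℝ := ∫ x in Ioi (0:ℝ), ‖u x‖ ^ (p+1)

/-- The action functional `S(u) = ½H(u) + (ω/2)‖u‖² − (1/(p+1))‖u‖^{p+1}_{L^{p+1}}`. -/
noncomputable def Sfun (p ω c : ℝ) (u : ℝ → ℂ) : ℝ :=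
  (1/2) * Hfun c u + (ω/2) * Mfun u - (1/(p+1)) * Nfun p u

/-- The Nehari manifold `N = {u ∈ H¹₀(0,∞)\{0} : H(u) + ω‖u‖² = ‖u‖^{p+1}_{L^{p+1}}}`. -/
def Nehari (p ω c : ℝ) : Set (ℝ → ℂ) :=
  {u | H10 u ∧ u ≠ 0 ∧ Hfun c u + ω * Mfun u = Nfun p u}


/-- The energy `E(u) = ½‖u'‖² − (c/2)‖u/x‖² − (1/(p+1))‖u‖^{p+1}_{L^{p+1}}`. -/
noncomputable def Efun (p c : ℝ) (u : ℝ → ℂ) : ℝ :=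
  (1/2) * Hfun c u - (1/(p+1)) * Nfun p u

/-- The virial functional `Q(v) = ‖v'‖² − c‖v/x‖² − ((p−1)/(2(p+1)))‖v‖^{p+1}_{L^{p+1}}`. -/
noncomputable def Qfun (p c : ℝ) (u : ℝ → ℂ) : ℝ :=
  Hfun c u - ((p-1)/(2*(p+1))) * Nfun p u

theorem Nfun_nonneg (p : ℝ) (u : ℝ → ℂ) : 0 ≤ Nfun p u :=
  integral_nonneg fun _ => Real.rpow_nonneg (norm_nonneg _) _

theorem Qfun_eq_two_mul_Efun_add (p c : ℝ) (hp : p + 1 ≠ 0) (u : ℝ → ℂ) :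
    Qfun p c u = 2 * Efun p c u + (5 - p) / (2 * (p + 1)) * Nfun p u := by
  unfold Qfun Efun
  field_simp
  ring

theorem Qfun_le_two_mul_Efun {p : ℝ} (hp : 5 ≤ p) (c : ℝ) (u : ℝ → ℂ) :
    Qfun p c u ≤ 2 * Efun p c u := by
  have hcoeff : (5 - p) / (2 * (p + 1)) ≤ 0 :=
    div_nonpos_of_nonpos_of_nonneg (by linarith) (by linarith)
  rw [Qfun_eq_two_mul_Efun_add p c (by linarith)]
  linarith [mul_nonpos_of_nonpos_of_nonneg hcoeff (Nfun_nonneg p u)]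

theorem ConcaveOn.le_add_mul_sub_of_hasDerivAt {S : Set ℝ} {f : ℝ → ℝ} {f' x y : ℝ}
    (hfc : ConcaveOn ℝ S f) (hx : x ∈ S) (hy : y ∈ S) (hf : HasDerivAt f f' x) :
    f y ≤ f x + f' * (y - x) := by
  rcases lt_trichotomy x y with hxy | rfl | hyx
  · have hslope := hfc.slope_le_of_hasDerivAt hx hy hxy hf
    rw [slope_def_field, div_le_iff₀ (sub_pos.2 hxy)] at hslope
    linarith
  · simp
  · have hslope := hfc.le_slope_of_hasDerivAt hy hx hyx hf
    rw [slope_def_field, le_div_iff₀ (sub_pos.2 hyx)] at hslope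
    linarith

theorem le_taylor_quadratic_of_deriv2_le {S : Set ℝ} (hSo : IsOpen S) (hSc : Convex ℝ S)
    {f f' f'' : ℝ → ℝ} {K x₀ x : ℝ} (hx₀ : x₀ ∈ S) (hx : x ∈ S)
    (hf : ∀ y ∈ S, HasDerivAt f (f' y) y) (hf' : ∀ y ∈ S, HasDerivAt f' (f'' y) y)
    (hK : ∀ y ∈ S, f'' y ≤ K) :
    f x ≤ f x₀ + f' x₀ * (x - x₀) + K / 2 * (x - x₀) ^ 2 := by
  set g : ℝ → ℝ := fun y => f y - K / 2 * (y - x₀) ^ 2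
  have hg : ∀ y ∈ S, HasDerivAt g (f' y - K * (y - x₀)) y := fun y hy => by
    refine ((hf y hy).fun_sub
      ((((hasDerivAt_id' y).sub_const x₀).fun_pow 2).const_mul (K / 2))).congr_deriv ?_
    norm_num
    ring
  have hg' : ∀ y ∈ S, HasDerivAt (fun y => f' y - K * (y - x₀)) (f'' y - K) y := fun y hy => by
    simpa using (hf' y hy).fun_sub (((hasDerivAt_id' y).sub_const x₀).const_mul K)
  have hconc : ConcaveOn ℝ S g := by
    refine concaveOn_of_hasDerivWithinAt2_nonpos (f' := fun y => f' y - K * (y - x₀))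
      (f'' := fun y => f'' y - K) hSc (fun y hy => (hg y hy).continuousAt.continuousWithinAt)
      ?_ ?_ ?_ <;> rw [hSo.interior_eq]
    · exact fun y hy => (hg y hy).hasDerivWithinAt
    · exact fun y hy => (hg' y hy).hasDerivWithinAt
    · exact fun y hy => sub_nonpos.2 (hK y hy)
  have htangent := hconc.le_add_mul_sub_of_hasDerivAt hx₀ hx (hg x₀ hx₀)
  simp only [g, sub_self] at htangent
  linarith

theorem exists_pos_quadratic_neg {A : ℝ} (hA : A < 0) (B C : ℝ) :
    ∃ T > 0, A * T ^ 2 + B * T + C < 0 := by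
  -- With `T = 1 + (|B| + |C|)/(-A)` one has `A T + |B| = A - |C|`, and `T ≥ 1`.
  have hquot : 0 ≤ (|B| + |C|) / -A := div_nonneg (by positivity) (neg_pos.2 hA).le
  refine ⟨1 + (|B| + |C|) / -A, by positivity, ?_⟩
  set T := 1 + (|B| + |C|) / -A with hT
  have hT1 : 1 ≤ T := le_add_of_nonneg_right hquot
  have hAT : A * T + |B| = A - |C| := by
    rw [hT, mul_add, mul_div_assoc', div_neg, mul_div_cancel_left₀ _ hA.ne]
    ring
  nlinarith [le_abs_self B, le_abs_self C, abs_nonneg C]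

theorem EReal.ne_bot_and_ne_top_of_quadratic_nonneg {a b : EReal} (ha : a < 0) (hb : 0 < b)
    {A B C : ℝ} (hA : A < 0) (h : ∀ t : ℝ, a < t → t < b → 0 ≤ A * t ^ 2 + B * t + C) :
    a ≠ ⊥ ∧ b ≠ ⊤ := by
  constructor
  · rintro rfl
    obtain ⟨T, hT, hneg⟩ := exists_pos_quadratic_neg hA (-B) C
    have hnonneg :=
      h (-T) (EReal.bot_lt_coe _) ((EReal.coe_lt_coe_iff.2 (neg_neg_of_pos hT)).trans hb)
    linarith [show A * (-T) ^ 2 + B * -T + C = A * T ^ 2 + -B * T + C by ring]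
  · rintro rfl
    obtain ⟨T, hT, hneg⟩ := exists_pos_quadratic_neg hA B C
    exact hneg.not_ge (h T (ha.trans (EReal.coe_lt_coe_iff.2 hT)) (EReal.coe_lt_top T))

theorem blow_up_negative_energy_general (p c : ℝ) (hp : 5 ≤ p)
    (a b : EReal) (ha : a < 0) (hb : 0 < b)
    (u : ℝ → ℝ → ℂ) (V : ℝ → ℝ)
    (hV : ∀ t : ℝ, V t = ∫ x in Ioi (0:ℝ), x^2 * ‖u t x‖^2)
    (hconserved : ∀ t : ℝ, a < (t:EReal) → (t:EReal) < b → Efun p c (u t) = Efun p c (u 0))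
    (hE0 : Efun p c (u 0) < 0)
    (hvirial1 : ∀ t : ℝ, a < (t:EReal) → (t:EReal) < b →
      HasDerivAt V
        (4 * ∫ x in Ioi (0:ℝ), ((starRingEnd ℂ) (u t x) * (x:ℂ) * deriv (u t) x).im) t)
    (hvirial2 : ∀ t : ℝ, a < (t:EReal) → (t:EReal) < b →
      HasDerivAt (deriv V) (8 * Qfun p c (u t)) t) :
    (∀ t : ℝ, a < (t:EReal) → (t:EReal) < b → Qfun p c (u t) ≤ 2 * Efun p c (u 0)) ∧
    (∃ C₁ : ℝ, ∀ t : ℝ, a < (t:EReal) → (t:EReal) < b →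
      V t ≤ 8 * Efun p c (u 0) * t^2 + C₁ * t + V 0) ∧
    a ≠ ⊥ ∧ b ≠ ⊤ := by
  have hQ : ∀ t : ℝ, a < t → t < b → Qfun p c (u t) ≤ 2 * Efun p c (u 0) := fun t hat htb =>
    hconserved t hat htb ▸ Qfun_le_two_mul_Efun hp c (u t)
  have hbound : ∀ t : ℝ, a < t → t < b →
      V t ≤ 8 * Efun p c (u 0) * t ^ 2 + deriv V 0 * t + V 0 := by
    intro t hat htb
    have htaylor := le_taylor_quadratic_of_deriv2_le (S := (↑) ⁻¹' Ioo a b) (x₀ := 0)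
      (K := 16 * Efun p c (u 0)) (isOpen_Ioo.preimage continuous_coe_real_ereal)
      (ordConnected_Ioo.preimage_mono EReal.coe_strictMono.monotone).convex ⟨ha, hb⟩ ⟨hat, htb⟩
      (fun s hs => (hvirial1 s hs.1 hs.2).differentiableAt.hasDerivAt)
      (fun s hs => hvirial2 s hs.1 hs.2) (fun s hs => by linarith [hQ s hs.1 hs.2])
    linarith
  have hV_nonneg : ∀ t, 0 ≤ V t := fun t => hV t ▸ integral_nonneg fun x => by positivity
  exact ⟨hQ, ⟨deriv V 0, hbound⟩, EReal.ne_bot_and_ne_top_of_quadratic_nonneg ha hb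
    (by linarith : 8 * Efun p c (u 0) < 0) fun t hat htb => (hV_nonneg t).trans (hbound t hat htb)⟩

/-- **Blow-up for negative energy (`p ≥ 5`).** Let `u(t)` be a solution on the maximal
interval `(−T_min, T_max)` (endpoints in `(0,∞]`, encoded as extended reals `a < 0 < b`)
with conserved negative energy, satisfying the virial identities
`(d/dt)‖xu(t)‖² = 4 Im ∫ ū x u' dx` and `(d²/dt²)‖xu(t)‖² = 8 Q(u(t))`. Then
`Q(u(t)) ≤ 2E(u₀) < 0`, `‖xu(t)‖² ≤ 8E(u₀)t² + C₁t + ‖xu₀‖²`, and consequently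
`T_min` and `T_max` are finite: the solution blows up in finite time. -/
theorem blow_up_negative_energy (p ω c : ℝ) (hp : 5 ≤ p) (hω : 0 < ω)
    (hc : 0 < c) (hc' : c < 1/4)
    (a b : EReal) (ha : a < 0) (hb : 0 < b)
    (u : ℝ → ℝ → ℂ) (V : ℝ → ℝ)
    (hH10 : ∀ t : ℝ, a < (t:EReal) → (t:EReal) < b → H10 (u t))
    (hV : ∀ t : ℝ, V t = ∫ x in Ioi (0:ℝ), x^2 * ‖u t x‖^2)
    (hconserved : ∀ t : ℝ, a < (t:EReal) → (t:EReal) < b → Efun p c (u t) = Efun p c (u 0))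
    (hE0 : Efun p c (u 0) < 0)
    (hvirial1 : ∀ t : ℝ, a < (t:EReal) → (t:EReal) < b →
      HasDerivAt V
        (4 * ∫ x in Ioi (0:ℝ), ((starRingEnd ℂ) (u t x) * (x:ℂ) * deriv (u t) x).im) t)
    (hvirial2 : ∀ t : ℝ, a < (t:EReal) → (t:EReal) < b →
      HasDerivAt (deriv V) (8 * Qfun p c (u t)) t) :
    (∀ t : ℝ, a < (t:EReal) → (t:EReal) < b → Qfun p c (u t) ≤ 2 * Efun p c (u 0)) ∧
    (∃ C₁ : ℝ, ∀ t : ℝ, a < (t:EReal) → (t:EReal) < b →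
      V t ≤ 8 * Efun p c (u 0) * t^2 + C₁ * t + V 0) ∧
    a ≠ ⊥ ∧ b ≠ ⊤ :=
  blow_up_negative_energy_general p c hp a b ha hb u V hV hconserved hE0 hvirial1 hvirial2
end
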